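/- Let p be a prime and let C be a linear code of length n and dimension k ≥ 2 over ℤ_p with minimum Hamming distance d. Then either (1) C is MDS (d = n−k+1), in which case d_L(C) ≤ ⌊μ_p·(n−k+1)·(p−1)/p⌋ + 1, or (2) C has Singleton defect s = n−k+1−d > 0, in which case d_L(C) ≤ μ_p·(n−k+1−s) ≤ μ_p·(n−k). -/
import Mathlib


/-- Lee weight of an element of `ZMod q`. -/
noncomputable def leeWt {q : ℕ} (a : ZMod q) : ℕ := min (ZMod.val a) (q - ZMod.val a)

/-- Lee weight of a vector over `ZMod q`. -/
noncomputable def leeWtVec {q n : ℕ} (x : Fin n → ZMod q) : ℕ := ∑ i, leeWt (x i)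

/-- Minimum Lee distance (= minimum Lee weight of a nonzero codeword) of a linear code. -/
noncomputable def minLee {q n : ℕ} (C : Submodule (ZMod q) (Fin n → ZMod q)) : ℕ :=
  sInf {w | ∃ x ∈ C, x ≠ 0 ∧ leeWtVec x = w}

/-- Minimum Hamming distance (= minimum Hamming weight of a nonzero codeword). -/
noncomputable def minHam {q n : ℕ} (C : Submodule (ZMod q) (Fin n → ZMod q)) : ℕ :=
  sInf {w | ∃ x ∈ C, x ≠ 0 ∧ hammingNorm x = w}

/-- Average nonzero Lee weight of `ZMod q`. -/
noncomputable def mu (q : ℕ) : ℚ :=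
  if Even q then (q : ℚ)^2 / (4 * ((q : ℚ) - 1)) else ((q : ℚ) + 1) / 4

/-- `Phi n k p`: the maximum minimum Lee distance over `k`-dimensional linear codes
of length `n` over `ZMod p`. -/
noncomputable def Phi (n k p : ℕ) : ℕ :=
  sSup {d | ∃ C : Submodule (ZMod p) (Fin n → ZMod p),
    Module.finrank (ZMod p) ↥C = k ∧ minLee C = d}

/-- Rank of a linear code over `ZMod q`: minimal number of generators. -/
noncomputable def codeRank {q n : ℕ} (C : Submodule (ZMod q) (Fin n → ZMod q)) : ℕ :=
  sInf {m | ∃ s : Finset (Fin n → ZMod q), s.card = m ∧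
    Submodule.span (ZMod q) (↑s : Set (Fin n → ZMod q)) = C}

/-- `PhiR n K q`: the maximum minimum Lee distance over rank-`K` linear codes of
length `n` over `ZMod q`. -/
noncomputable def PhiR (n K q : ℕ) : ℕ :=
  sSup {d | ∃ C : Submodule (ZMod q) (Fin n → ZMod q), codeRank C = K ∧ minLee C = d}

lemma sum_min_eq (m q : ℕ) (hq : q = 2*m ∨ q = 2*m+1) :
    ∑ v ∈ Finset.range q, min v (q - v) = m * (q - m) := by
  rcases Nat.eq_zero_or_pos q with h0 | hq0
  · subst h0
    have : m = 0 := by omega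
    subst this; simp
  have h1 : m + 1 ≤ q := by omega
  rw [Finset.range_eq_Ico, ← Finset.sum_Ico_consecutive _ (Nat.zero_le (m+1)) h1]
  have e1 : ∑ v ∈ Finset.Ico 0 (m+1), min v (q - v) = ∑ v ∈ Finset.range (m+1), v := by
    rw [← Finset.range_eq_Ico]
    refine Finset.sum_congr rfl fun v hv => ?_
    rw [Finset.mem_range] at hv
    exact min_eq_left (by omega)
  have e2 : ∑ v ∈ Finset.Ico (m+1) q, min v (q - v) = ∑ v ∈ Finset.Ico 1 (q - m), v := by
    have : ∑ v ∈ Finset.Ico (m+1) q, min v (q - v) = ∑ v ∈ Finset.Ico (m+1) q, (q - v) := by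
      refine Finset.sum_congr rfl fun v hv => ?_
      rw [Finset.mem_Ico] at hv
      exact min_eq_right (by omega)
    rw [this]
    have := Finset.sum_Ico_reflect (fun j => j) (m+1) (n := q) (m := q) (by omega)
    simpa using this
  rw [e1, e2]
  have e3 : ∑ v ∈ Finset.Ico 1 (q - m), v = ∑ v ∈ Finset.range (q - m), v := by
    rw [Finset.range_eq_Ico]
    rcases Nat.eq_zero_or_pos (q - m) with h | h
    · rw [h]; rfl
    · rw [← Finset.sum_Ico_consecutive _ (Nat.zero_le 1) (by omega)]
      simp
  rw [e3]
  have g1 := Finset.sum_range_id_mul_two (m+1)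
  have g2 := Finset.sum_range_id_mul_two (q - m)
  rcases hq with h | h <;> subst h
  · have hqm : 2*m - m = m := by omega
    rw [hqm] at g2 ⊢
    rcases Nat.eq_zero_or_pos m with h | h
    · subst h; simp
    · obtain ⟨l, rfl⟩ : ∃ l, m = l + 1 := ⟨m - 1, by omega⟩
      simp only [Nat.add_sub_cancel] at g1 g2
      nlinarith [g1, g2]
  · have hqm : 2*m + 1 - m = m + 1 := by omega
    rw [hqm] at g2 ⊢
    simp only [Nat.add_sub_cancel] at g1 g2
    nlinarith [g1, g2]

lemma leeWt_sum_eq (q : ℕ) [NeZero q] (hq : 2 ≤ q) :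
    ∑ a : ZMod q, (leeWt a : ℚ) = mu q * ((q:ℚ) - 1) := by
  have h1 : ∑ a : ZMod q, leeWt a = ∑ v ∈ Finset.range q, min v (q - v) := by
    refine Finset.sum_bij' (fun (a : ZMod q) _ => a.val) (fun v _ => (v : ZMod q))
      (fun a _ => Finset.mem_range.mpr a.val_lt) (fun v _ => Finset.mem_univ _)
      (fun a _ => ?_) (fun v hv => ?_) (fun a _ => rfl)
    · exact ZMod.natCast_rightInverse a
    · exact ZMod.val_cast_of_lt (Finset.mem_range.mp hv)
  obtain ⟨m, hm⟩ : ∃ m, q = 2*m ∨ q = 2*m+1 := ⟨q/2, by omega⟩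
  have h2 : ∑ a : ZMod q, (leeWt a : ℚ) = ((m * (q - m) : ℕ) : ℚ) := by
    rw [← Nat.cast_sum, h1, sum_min_eq m q hm]
  rw [h2]
  rcases hm with h | h
  · have hqm : q - m = m := by omega
    have hev : Even q := ⟨m, by omega⟩
    rw [hqm, mu, if_pos hev]
    have hq1 : (q : ℚ) - 1 ≠ 0 := by
      have : (2:ℚ) ≤ q := by exact_mod_cast hq
      intro hc; rw [sub_eq_zero] at hc; rw [hc] at this; norm_num at this
    field_simp
    have : (q : ℚ) = 2 * m := by exact_mod_cast congrArg (Nat.cast (R := ℚ)) h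
    rw [this]; push_cast; ring
  · have hqm : q - m = m + 1 := by omega
    have hod : ¬ Even q := by rw [h]; simp [Nat.even_iff]
    rw [hqm, mu, if_neg hod]
    have : (q : ℚ) = 2 * m + 1 := by exact_mod_cast congrArg (Nat.cast (R := ℚ)) h
    rw [this]; push_cast; ring

lemma leeWt_shift_sum (q : ℕ) [Fact q.Prime] (t s : ZMod q) (hs : s ≠ 0) :
    ∑ b : ZMod q, (leeWt (t + b * s) : ℚ) = ∑ a : ZMod q, (leeWt a : ℚ) :=
  Fintype.sum_equiv ((Equiv.mulRight₀ s hs).trans (Equiv.addLeft t)) _ _ (fun b => rfl)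

lemma leeWt_zero' (q : ℕ) [NeZero q] : leeWt (0 : ZMod q) = 0 := by
  simp [leeWt, ZMod.val_zero]

lemma leeWt_one' (q : ℕ) (hq : 2 ≤ q) : leeWt (1 : ZMod q) = 1 := by
  haveI : Fact (1 < q) := ⟨by omega⟩
  rw [leeWt, ZMod.val_one]
  omega

private lemma ker_codim_ge {p n : ℕ} [Fact p.Prime] (C : Submodule (ZMod p) (Fin n → ZMod p))
    (F : Finset (Fin n)) :
    Module.finrank (ZMod p) ↥C ≤ Module.finrank (ZMod p)
      ↥(LinearMap.ker ((LinearMap.funLeft (ZMod p) (ZMod p) ((↑) : F → Fin n)).comp C.subtype))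
      + F.card := by
  set g := (LinearMap.funLeft (ZMod p) (ZMod p) ((↑) : F → Fin n)).comp C.subtype with hg
  have h1 := LinearMap.finrank_range_add_finrank_ker g
  have h2 : Module.finrank (ZMod p) ↥(LinearMap.range g) ≤ F.card := by
    refine le_trans (Submodule.finrank_le _) ?_
    rw [Module.finrank_fintype_fun_eq_card, Fintype.card_coe]
  omega

lemma avg_lemma {p n : ℕ} [Fact p.Prime] (x y : Fin n → ZMod p) (j : Fin n)
    (hxj : x j = 0) (hyj : y j = 1) (hy0 : ∀ i, i ≠ j → x i = 0 → y i = 0) :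
    ∑ b : ZMod p, (leeWtVec (y + b • x) : ℚ)
      = (hammingNorm x : ℚ) * (∑ a : ZMod p, (leeWt a : ℚ)) + p := by
  classical
  haveI : NeZero p := ⟨(Fact.out : p.Prime).pos.ne'⟩
  have hp2 : 2 ≤ p := (Fact.out : p.Prime).two_le
  set Wq := ∑ a : ZMod p, (leeWt a : ℚ) with hWq
  have e0 : ∀ b : ZMod p, (leeWtVec (y + b • x) : ℚ) = ∑ i, (leeWt (y i + b * x i) : ℚ) := by
    intro b
    rw [leeWtVec, Nat.cast_sum]
    exact Finset.sum_congr rfl fun i _ => by simp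
  rw [Finset.sum_congr rfl (fun b _ => e0 b), Finset.sum_comm]
  have per : ∀ i : Fin n, ∑ b : ZMod p, (leeWt (y i + b * x i) : ℚ)
      = (if x i ≠ 0 then Wq else 0) + (if i = j then (p:ℚ) else 0) := by
    intro i
    by_cases hxi : x i = 0
    · rw [if_neg (by simpa using hxi)]
      simp only [hxi, mul_zero, add_zero]
      by_cases hij : i = j
      · subst hij
        rw [hyj, if_pos rfl, Finset.sum_const, leeWt_one' p hp2]
        simp [ZMod.card]
      · rw [hy0 i hij hxi, if_neg hij, leeWt_zero']
        simp
    · rw [if_pos hxi, leeWt_shift_sum p (y i) (x i) hxi]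
      have hij : i ≠ j := fun h => hxi (h ▸ hxj)
      rw [if_neg hij, add_zero]
  rw [Finset.sum_congr rfl (fun i _ => per i), Finset.sum_add_distrib]
  congr 1
  · rw [← Finset.sum_filter, Finset.sum_const, nsmul_eq_mul, hammingNorm]
  · simp

theorem mds_or_defect_bound (p n k d : ℕ) (hp : p.Prime) (hk : 2 ≤ k)
    (C : Submodule (ZMod p) (Fin n → ZMod p)) (hC : C ≠ ⊥)
    (hdim : Module.finrank (ZMod p) ↥C = k)
    (hd : minHam C = d) :
    ((d : ℤ) = (n : ℤ) - (k : ℤ) + 1 ∧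
      (minLee C : ℤ) ≤ ⌊mu p * ((n : ℚ) - (k : ℚ) + 1) * ((p : ℚ) - 1) / (p : ℚ)⌋ + 1) ∨
    (∃ s : ℕ, 0 < s ∧ (s : ℤ) = (n : ℤ) - (k : ℤ) + 1 - (d : ℤ) ∧
      (minLee C : ℚ) ≤ mu p * ((n : ℚ) - (k : ℚ) + 1 - (s : ℚ)) ∧
      mu p * ((n : ℚ) - (k : ℚ) + 1 - (s : ℚ)) ≤ mu p * ((n : ℚ) - (k : ℚ))) := by
  classical
  haveI instF : Fact p.Prime := ⟨hp⟩
  haveI : NeZero p := ⟨hp.pos.ne'⟩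
  have hp2 : 2 ≤ p := hp.two_le
  set Wq := ∑ a : ZMod p, (leeWt a : ℚ) with hWqdef
  have hWq : Wq = mu p * ((p:ℚ) - 1) := leeWt_sum_eq p hp2
  have hpQ : (0:ℚ) < p := by exact_mod_cast hp.pos
  have hne : {w | ∃ x ∈ C, x ≠ 0 ∧ hammingNorm x = w}.Nonempty := by
    obtain ⟨x, hxC, hx0⟩ := Submodule.exists_mem_ne_zero_of_ne_bot hC
    exact ⟨hammingNorm x, x, hxC, hx0, rfl⟩
  have h0 : d ∈ {w | ∃ x ∈ C, x ≠ 0 ∧ hammingNorm x = w} := by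
    have := Nat.sInf_mem hne
    rwa [show sInf {w | ∃ x ∈ C, x ≠ 0 ∧ hammingNorm x = w} = minHam C from rfl, hd] at this
  obtain ⟨x, hxC, hx0, hxd⟩ := h0
  have hlow : ∀ z, z ∈ C → z ≠ 0 → d ≤ hammingNorm z := by
    intro z hz hz0
    have : minHam C ≤ hammingNorm z := Nat.sInf_le ⟨z, hz, hz0, rfl⟩
    omega
  have hd1 : 1 ≤ d := by
    rcases Nat.eq_zero_or_pos d with h | h
    · exact absurd (hammingNorm_eq_zero.mp (by omega)) hx0
    · exact h
  have hrankamb : Module.finrank (ZMod p) (Fin n → ZMod p) = n := by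
    rw [Module.finrank_fintype_fun_eq_card, Fintype.card_fin]
  have hkn : k ≤ n := by
    have := Submodule.finrank_le C
    omega
  -- the Singleton bound
  have hsingleton : d ≤ n - k + 1 := by
    obtain ⟨F, -, hFcard⟩ := Finset.exists_subset_card_eq
      (s := (Finset.univ : Finset (Fin n))) (n := k - 1)
      (by rw [Finset.card_univ, Fintype.card_fin]; omega)
    have hker := ker_codim_ge C F
    rw [hdim, hFcard] at hker
    set g := (LinearMap.funLeft (ZMod p) (ZMod p) ((↑) : F → Fin n)).comp C.subtype with hg
    have hne' : LinearMap.ker g ≠ ⊥ := by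
      intro hbot
      rw [hbot, finrank_bot] at hker
      omega
    obtain ⟨z, hzK, hz0⟩ := Submodule.exists_mem_ne_zero_of_ne_bot hne'
    have hz0' : (z : Fin n → ZMod p) ≠ 0 := by
      simpa using (Submodule.coe_eq_zero.not.mpr hz0)
    have hzF : ∀ i, i ∈ F → (z : Fin n → ZMod p) i = 0 := by
      intro i hi
      have hgz : g z = 0 := hzK
      exact congrFun hgz ⟨i, hi⟩
    have hnorm : hammingNorm (z : Fin n → ZMod p) ≤ n - (k - 1) := by
      have hsub : ({i | (z : Fin n → ZMod p) i ≠ 0} : Finset (Fin n)) ⊆ Fᶜ := by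
        intro i hi
        rw [Finset.mem_filter] at hi
        rw [Finset.mem_compl]
        intro hiF
        exact hi.2 (hzF i hiF)
      calc hammingNorm (z : Fin n → ZMod p) ≤ Fᶜ.card := Finset.card_le_card hsub
        _ = n - (k - 1) := by rw [Finset.card_compl, hFcard, Fintype.card_fin]
    have := hlow _ z.2 hz0'
    omega
  have hmu0 : 0 ≤ mu p := by
    have h1p : (1:ℚ) ≤ p := by exact_mod_cast hp.one_lt.le
    rw [mu]
    split
    · apply div_nonneg (by positivity); linarith
    · linarith
  by_cases hmds : d = n - k + 1
  · -- MDS case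
    left
    refine ⟨by omega, ?_⟩
    have hdQ : (d : ℚ) = (n : ℚ) - k + 1 := by
      have : (d : ℤ) = (n : ℤ) - k + 1 := by omega
      exact_mod_cast this
    set S : Finset (Fin n) := {i | x i ≠ 0} with hS
    have hScard : S.card = d := hxd
    have hSmem : ∀ i, i ∈ S ↔ x i ≠ 0 := by
      intro i; rw [hS, Finset.mem_filter]; simp
    obtain ⟨j, hj⟩ : ∃ j, j ∉ S := by
      by_contra h
      push_neg at h
      have : S = Finset.univ := Finset.eq_univ_iff_forall.mpr h
      rw [this, Finset.card_univ, Fintype.card_fin] at hScard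
      omega
    have hxj : x j = 0 := by
      by_contra h
      exact hj ((hSmem j).mpr h)
    set T : Finset (Fin n) := insert j S with hT
    have hTcard : T.card = d + 1 := by
      rw [hT, Finset.card_insert_of_notMem hj, hScard]
    set F : Finset (Fin n) := Tᶜ with hF
    have hFcard : F.card = n - (d + 1) := by
      rw [hF, Finset.card_compl, hTcard, Fintype.card_fin]
    have hker := ker_codim_ge C F
    rw [hdim, hFcard] at hker
    set g := (LinearMap.funLeft (ZMod p) (ZMod p) ((↑) : F → Fin n)).comp C.subtype with hg
    set K := LinearMap.ker g with hK
    have hKrank : 2 ≤ Module.finrank (ZMod p) ↥K := by omega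
    have hKvanish : ∀ z : ↥C, z ∈ K → ∀ i, i ∉ T → (z : Fin n → ZMod p) i = 0 := by
      intro z hz i hi
      have hgz : g z = 0 := hz
      exact congrFun hgz ⟨i, Finset.mem_compl.mpr hi⟩
    have hexz : ∃ z : ↥C, z ∈ K ∧ (z : Fin n → ZMod p) j ≠ 0 := by
      by_contra h
      push_neg at h
      obtain ⟨i0, hi0⟩ : S.Nonempty := Finset.card_pos.mp (by omega)
      set ψ : ↥K →ₗ[ZMod p] ZMod p :=
        (LinearMap.proj i0).comp ((C.subtype).comp K.subtype) with hψ
      have hinj : Function.Injective ψ := by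
        rw [← LinearMap.ker_eq_bot, LinearMap.ker_eq_bot']
        intro w hw
        have hw0 : ((w : ↥C) : Fin n → ZMod p) i0 = 0 := hw
        have hwvan : ∀ i, i ∉ T → ((w : ↥C) : Fin n → ZMod p) i = 0 :=
          hKvanish (w : ↥C) w.2
        have hwj : ((w : ↥C) : Fin n → ZMod p) j = 0 := h (w : ↥C) w.2
        have hnorm : hammingNorm ((w : ↥C) : Fin n → ZMod p) ≤ d - 1 := by
          have hsub : ({i | ((w : ↥C) : Fin n → ZMod p) i ≠ 0} : Finset (Fin n))
              ⊆ S.erase i0 := by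
            intro i hi
            rw [Finset.mem_filter] at hi
            have hiT : i ∈ T := by
              by_contra hiT
              exact hi.2 (hwvan i hiT)
            have hij : i ≠ j := by
              intro hc; subst hc; exact hi.2 hwj
            have hiS : i ∈ S := by
              rcases Finset.mem_insert.mp hiT with h' | h'
              · exact absurd h' hij
              · exact h'
            refine Finset.mem_erase.mpr ⟨?_, hiS⟩
            intro hc; subst hc; exact hi.2 hw0
          calc hammingNorm ((w : ↥C) : Fin n → ZMod p) ≤ (S.erase i0).card :=
              Finset.card_le_card hsub
            _ = d - 1 := by rw [Finset.card_erase_of_mem hi0, hScard]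
        have hwz : ((w : ↥C) : Fin n → ZMod p) = 0 := by
          by_contra hw0'
          have := hlow _ (w : ↥C).2 hw0'
          omega
        have : (w : ↥C) = 0 := Subtype.ext hwz
        exact Subtype.ext this
      have hle := LinearMap.finrank_le_finrank_of_injective hinj
      rw [Module.finrank_self] at hle
      omega
    obtain ⟨z, hzK, hzj⟩ := hexz
    set z0 : Fin n → ZMod p := (z : Fin n → ZMod p) with hz0def
    set y : Fin n → ZMod p := (z0 j)⁻¹ • z0 with hy
    have hyC : y ∈ C := C.smul_mem _ z.2
    have hyj : y j = 1 := by
      rw [hy]; simp only [Pi.smul_apply, smul_eq_mul]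
      exact inv_mul_cancel₀ hzj
    have hyout : ∀ i, i ∉ T → y i = 0 := by
      intro i hi
      have hzi : z0 i = 0 := hKvanish z hzK i hi
      rw [hy]
      simp only [Pi.smul_apply, smul_eq_mul, hzi, mul_zero]
    have hy0 : ∀ i, i ≠ j → x i = 0 → y i = 0 := by
      intro i hij hxi
      apply hyout
      intro hiT
      rcases Finset.mem_insert.mp hiT with h' | h'
      · exact hij h'
      · exact ((hSmem i).mp h') hxi
    have hsum : ∑ b : ZMod p, (leeWtVec (y + b • x) : ℚ) = (d:ℚ) * Wq + p := by
      rw [avg_lemma x y j hxj hyj hy0, hxd]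
    obtain ⟨b, -, hble⟩ := Finset.exists_le_of_sum_le (s := (Finset.univ : Finset (ZMod p)))
      (f := fun b => (leeWtVec (y + b • x) : ℚ))
      (g := fun _ => ((d:ℚ) * Wq + p) / p) Finset.univ_nonempty
      (by
        rw [hsum, Finset.sum_const, Finset.card_univ, ZMod.card, nsmul_eq_mul]
        have : (p:ℚ) * (((d:ℚ) * Wq + p) / p) = (d:ℚ) * Wq + p := by
          field_simp
        rw [this])
    have hmemC : y + b • x ∈ C := C.add_mem hyC (C.smul_mem b hxC)
    have hnz : y + b • x ≠ 0 := by
      intro hzeq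
      have := congrFun hzeq j
      rw [Pi.add_apply, Pi.smul_apply, smul_eq_mul, hyj, hxj, mul_zero, add_zero] at this
      exact one_ne_zero this
    have hminle : minLee C ≤ leeWtVec (y + b • x) :=
      Nat.sInf_le ⟨y + b • x, hmemC, hnz, rfl⟩
    have hminleQ : (minLee C : ℚ) ≤ ((d:ℚ) * Wq + p) / p := by
      calc (minLee C : ℚ) ≤ (leeWtVec (y + b • x) : ℚ) := by exact_mod_cast hminle
        _ ≤ _ := hble
    have hXeq : mu p * ((n:ℚ) - k + 1) * ((p:ℚ) - 1) / p = (d:ℚ) * Wq / p := by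
      rw [hWq, ← hdQ]; ring
    have hid : ((d:ℚ) * Wq + p) / p = (d:ℚ) * Wq / p + 1 := by
      field_simp
    have h1 : (minLee C : ℤ) - 1 ≤ ⌊mu p * ((n:ℚ) - k + 1) * ((p:ℚ) - 1) / p⌋ := by
      rw [Int.le_floor, hXeq]
      push_cast
      linarith [hminleQ, hid]
    omega
  · -- defect case
    right
    have hsq : ((n - k + 1 - d : ℕ) : ℚ) = (n:ℚ) - k + 1 - d := by
      have hz : ((n - k + 1 - d : ℕ) : ℤ) = (n:ℤ) - k + 1 - d := by omega
      exact_mod_cast hz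
    have hrw : (n:ℚ) - k + 1 - ((n:ℚ) - k + 1 - d) = d := by ring
    have hdnk : (d:ℚ) ≤ (n:ℚ) - k := by
      have : (d:ℤ) ≤ (n:ℤ) - k := by omega
      exact_mod_cast this
    have hsum0 : ∑ c : ZMod p, (leeWtVec (c • x) : ℚ) = (d:ℚ) * Wq := by
      have e0 : ∀ c : ZMod p, (leeWtVec (c • x) : ℚ) = ∑ i, (leeWt (c * x i) : ℚ) := by
        intro c; rw [leeWtVec, Nat.cast_sum]
        exact Finset.sum_congr rfl fun i _ => by simp
      rw [Finset.sum_congr rfl fun c _ => e0 c, Finset.sum_comm]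
      have per : ∀ i : Fin n, ∑ c : ZMod p, (leeWt (c * x i) : ℚ)
          = if x i ≠ 0 then Wq else 0 := by
        intro i
        by_cases hxi : x i = 0
        · rw [if_neg (by simpa using hxi)]
          simp [hxi, leeWt_zero']
        · rw [if_pos hxi]
          have := leeWt_shift_sum p 0 (x i) hxi
          simpa using this
      rw [Finset.sum_congr rfl fun i _ => per i, ← Finset.sum_filter, Finset.sum_const,
        nsmul_eq_mul, ← hxd, hammingNorm]
    have hzero : ((leeWtVec ((0 : ZMod p) • x) : ℕ) : ℚ) = 0 := by
      rw [zero_smul]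
      simp [leeWtVec, leeWt_zero']
    have hsum1 : ∑ c ∈ Finset.univ.erase (0 : ZMod p), (leeWtVec (c • x) : ℚ) = (d:ℚ) * Wq := by
      have h' : ∑ c ∈ Finset.univ.erase (0 : ZMod p), (leeWtVec (c • x) : ℚ)
          = ∑ c : ZMod p, (leeWtVec (c • x) : ℚ) := Finset.sum_erase _ hzero
      rw [h', hsum0]
    have hcard : (Finset.univ.erase (0 : ZMod p)).card = p - 1 := by
      rw [Finset.card_erase_of_mem (Finset.mem_univ _), Finset.card_univ, ZMod.card]
    obtain ⟨c, hc, hcle⟩ := Finset.exists_le_of_sum_le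
      (s := Finset.univ.erase (0 : ZMod p))
      (f := fun c => (leeWtVec (c • x) : ℚ)) (g := fun _ => mu p * d)
      ⟨1, Finset.mem_erase.mpr ⟨one_ne_zero, Finset.mem_univ _⟩⟩
      (by
        rw [hsum1, Finset.sum_const, hcard, nsmul_eq_mul]
        have hc1 : ((p - 1 : ℕ) : ℚ) = (p:ℚ) - 1 := by
          have : (1:ℕ) ≤ p := by omega
          push_cast [this]
          ring
        rw [hc1, hWq]
        exact le_of_eq (by ring))
    have hc0 : c ≠ 0 := (Finset.mem_erase.mp hc).1
    have hcxC : c • x ∈ C := C.smul_mem c hxC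
    have hcx0 : c • x ≠ 0 := smul_ne_zero hc0 hx0
    have hminle : minLee C ≤ leeWtVec (c • x) :=
      Nat.sInf_le ⟨c • x, hcxC, hcx0, rfl⟩
    have hminleQ : (minLee C : ℚ) ≤ mu p * d := by
      calc (minLee C : ℚ) ≤ (leeWtVec (c • x) : ℚ) := by exact_mod_cast hminle
        _ ≤ _ := hcle
    refine ⟨n - k + 1 - d, by omega, by omega, ?_, ?_⟩
    · rw [hsq, hrw]
      exact hminleQ
    · rw [hsq, hrw]
      exact mul_le_mul_of_nonneg_left hdnk hmu0
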